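/- arXiv:2602.03395 — 3 statements merged into one kernel-verified Lean document; each statement's English description precedes it below -/
import Mathlib

section
/- Under the factor-model setup, the squared correlation between the model prediction and the target return satisfies Cov(ŷ, rΔ)² / (Var(ŷ) · Var(rΔ)) = α_δ² · α_Δ² / ((α_δ² + d·v) · (α_Δ² + σΔ²)). (This is the exact form of the paper's generalization-performance formula J(δ) = α(δ)²α(Δ)² / ([α(δ)² + K(δ+δ0)]·V_target), with K(δ+δ0) = d·v and σΔ² = σ²(Δ+δ0).) -/
/-!
Expand `ŷ` and `rΔ` in the coordinates of `s`. Every second moment becomes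
`∑ᵢⱼ E[Aᵢ Bⱼ] E[sᵢ sⱼ] = ∑ᵢ E[Aᵢ Bᵢ]`: the coefficients `A`, `B` are functions of `z`, hence
independent of `s`, and `s` is whitened. Every term containing `εΔ` vanishes because `εΔ` is
centered and independent of `(s, z)`. This gives `Cov(ŷ, rΔ) = α_δ α_Δ`, `Var ŷ = α_δ² + d v` and
`Var rΔ = α_Δ² + σΔ²`.
-/

open MeasureTheory ProbabilityTheory Finset

section SecondMoments

variable {Ω : Type*} [MeasurableSpace Ω] {μ : Measure Ω}

lemma integral_add_sq {X Y : Ω → ℝ} (hX : MemLp X 2 μ) (hY : MemLp Y 2 μ) :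
    ∫ ω, (X ω + Y ω) ^ 2 ∂μ = ∫ ω, X ω ^ 2 ∂μ + 2 * ∫ ω, X ω * Y ω ∂μ + ∫ ω, Y ω ^ 2 ∂μ := by
  have hXY : Integrable (fun ω => X ω * Y ω) μ := hX.integrable_mul hY
  have hX2 : Integrable (fun ω => X ω ^ 2) μ := hX.integrable_sq
  have hY2 : Integrable (fun ω => Y ω ^ 2) μ := hY.integrable_sq
  simp_rw [add_sq, mul_assoc]
  rw [integral_add _ hY2, integral_add hX2 (hXY.const_mul 2), integral_const_mul]
  exact hX2.add (hXY.const_mul 2)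

lemma ProbabilityTheory.IndepFun.integral_mul_eq_zero {X Y : Ω → ℝ} (h : IndepFun X Y μ)
    (hX : AEStronglyMeasurable X μ) (hY : AEStronglyMeasurable Y μ) (hY0 : ∫ ω, Y ω ∂μ = 0) :
    ∫ ω, X ω * Y ω ∂μ = 0 := by
  rw [h.integral_fun_mul_eq_mul_integral hX hY, hY0, mul_zero]

lemma integral_const_add_sq [IsProbabilityMeasure μ] {Z : Ω → ℝ} (hZ : MemLp Z 2 μ)
    (hZ0 : ∫ ω, Z ω ∂μ = 0) (c : ℝ) :
    ∫ ω, (c + Z ω) ^ 2 ∂μ = c ^ 2 + ∫ ω, Z ω ^ 2 ∂μ := by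
  rw [integral_add_sq (memLp_const c) hZ, integral_const_mul, hZ0]
  simp

lemma sum_mul_sum_eq_sum_sum_mul_mul {ι : Type*} [Fintype ι] (a b x : ι → ℝ) :
    (∑ i, a i * x i) * (∑ j, b j * x j) = ∑ i, ∑ j, (a i * b j) * (x i * x j) := by
  rw [sum_mul_sum]
  exact sum_congr rfl fun i _ => sum_congr rfl fun j _ => by ring

variable {ι : Type*} {A B s : Ω → ι → ℝ}

lemma ProbabilityTheory.IndepFun.mul_apply_mul_apply (hind : IndepFun (fun ω => (A ω, B ω)) s μ)
    (i j : ι) : IndepFun (fun ω => A ω i * B ω j) (fun ω => s ω i * s ω j) μ :=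
  hind.comp (φ := fun p : (ι → ℝ) × (ι → ℝ) => p.1 i * p.2 j) (ψ := fun x : ι → ℝ => x i * x j)
    (by fun_prop) (by fun_prop)

lemma ProbabilityTheory.IndepFun.integrable_mul_apply_mul_apply
    (hind : IndepFun (fun ω => (A ω, B ω)) s μ)
    (hA : ∀ i, MemLp (fun ω => A ω i) 2 μ) (hB : ∀ i, MemLp (fun ω => B ω i) 2 μ)
    (hs : ∀ i, MemLp (fun ω => s ω i) 2 μ) (i j : ι) :
    Integrable (fun ω => (A ω i * B ω j) * (s ω i * s ω j)) μ :=
  (hind.mul_apply_mul_apply i j).integrable_mul ((hA i).integrable_mul (hB j))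
    ((hs i).integrable_mul (hs j))

variable [Fintype ι]

lemma integrable_sum_mul_sum_of_indepFun (hind : IndepFun (fun ω => (A ω, B ω)) s μ)
    (hA : ∀ i, MemLp (fun ω => A ω i) 2 μ) (hB : ∀ i, MemLp (fun ω => B ω i) 2 μ)
    (hs : ∀ i, MemLp (fun ω => s ω i) 2 μ) :
    Integrable (fun ω => (∑ i, A ω i * s ω i) * (∑ j, B ω j * s ω j)) μ := by
  simp_rw [sum_mul_sum_eq_sum_sum_mul_mul]
  exact integrable_finsetSum _ fun i _ => integrable_finsetSum _ fun j _ =>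
    hind.integrable_mul_apply_mul_apply hA hB hs i j

lemma integral_sum_mul_sum_of_indepFun [DecidableEq ι]
    (hind : IndepFun (fun ω => (A ω, B ω)) s μ)
    (hA : ∀ i, MemLp (fun ω => A ω i) 2 μ) (hB : ∀ i, MemLp (fun ω => B ω i) 2 μ)
    (hs : ∀ i, MemLp (fun ω => s ω i) 2 μ)
    (hscov : ∀ i j, ∫ ω, s ω i * s ω j ∂μ = if i = j then 1 else 0) :
    ∫ ω, (∑ i, A ω i * s ω i) * (∑ j, B ω j * s ω j) ∂μ = ∑ i, ∫ ω, A ω i * B ω i ∂μ := by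
  have hterm : ∀ i j, ∫ ω, (A ω i * B ω j) * (s ω i * s ω j) ∂μ
      = (∫ ω, A ω i * B ω j ∂μ) * if i = j then 1 else 0 := fun i j => by
    rw [(hind.mul_apply_mul_apply i j).integral_fun_mul_eq_mul_integral
      ((hA i).integrable_mul (hB j)).1 ((hs i).integrable_mul (hs j)).1, hscov]
  simp_rw [sum_mul_sum_eq_sum_sum_mul_mul]
  rw [integral_finsetSum _ fun i _ => integrable_finsetSum _ fun j _ =>
    hind.integrable_mul_apply_mul_apply hA hB hs i j]
  refine sum_congr rfl fun i _ => ?_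
  rw [integral_finsetSum _ fun j _ => hind.integrable_mul_apply_mul_apply hA hB hs i j]
  simp [hterm]

lemma memLp_two_sum_mul_of_indepFun (hind : IndepFun A s μ)
    (hA : ∀ i, MemLp (fun ω => A ω i) 2 μ) (hs : ∀ i, MemLp (fun ω => s ω i) 2 μ) :
    MemLp (fun ω => ∑ i, A ω i * s ω i) 2 μ := by
  refine (memLp_two_iff_integrable_sq ?_).2 ?_
  · exact aestronglyMeasurable_fun_sum _ fun i _ => (hA i).1.mul (hs i).1
  · simp_rw [sq]
    exact integrable_sum_mul_sum_of_indepFun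
      (hind.comp (φ := fun a : ι → ℝ => (a, a)) (by fun_prop) measurable_id) hA hA hs

end SecondMoments

section FactorModel

variable {Ω ι : Type*} [MeasurableSpace Ω] {μ : Measure Ω} [IsProbabilityMeasure μ]
  [Fintype ι] [DecidableEq ι] {w : ι → ℝ} {s z : Ω → ι → ℝ} {ε : Ω → ℝ}

lemma integral_sq_sum_mul_eq_one (hw : ∑ i, w i ^ 2 = 1)
    (hs : ∀ i, MemLp (fun ω => s ω i) 2 μ)
    (hscov : ∀ i j, ∫ ω, s ω i * s ω j ∂μ = if i = j then 1 else 0) :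
    ∫ ω, (∑ i, w i * s ω i) ^ 2 ∂μ = 1 := by
  simp_rw [sq]
  rw [integral_sum_mul_sum_of_indepFun (A := fun _ => w) (B := fun _ => w)
    (indepFun_const_left _ _) (fun i => memLp_const (w i)) (fun i => memLp_const (w i)) hs hscov]
  simpa [sq] using hw

lemma integral_target_sq (hw : ∑ i, w i ^ 2 = 1) (hs : ∀ i, MemLp (fun ω => s ω i) 2 μ)
    (hscov : ∀ i j, ∫ ω, s ω i * s ω j ∂μ = if i = j then 1 else 0)
    (hε : MemLp ε 2 μ) (hε0 : ∫ ω, ε ω ∂μ = 0) (hind : IndepFun s ε μ) (b : ℝ) :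
    ∫ ω, (b * ∑ i, w i * s ω i + ε ω) ^ 2 ∂μ = b ^ 2 + ∫ ω, ε ω ^ 2 ∂μ := by
  have hS : MemLp (fun ω => ∑ i, w i * s ω i) 2 μ :=
    memLp_finsetSum _ fun i _ => (hs i).const_mul (w i)
  have hSε : IndepFun (fun ω => ∑ i, w i * s ω i) ε μ :=
    hind.comp (φ := fun x : ι → ℝ => ∑ i, w i * x i) (by fun_prop) measurable_id
  rw [integral_add_sq (hS.const_mul b) hε]
  simp_rw [mul_pow, mul_assoc]
  rw [integral_const_mul, integral_const_mul, integral_sq_sum_mul_eq_one hw hs hscov,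
    hSε.integral_mul_eq_zero hS.1 hε.1 hε0]
  ring

lemma integral_prediction_sq (hw : ∑ i, w i ^ 2 = 1) (hs : ∀ i, MemLp (fun ω => s ω i) 2 μ)
    (hscov : ∀ i j, ∫ ω, s ω i * s ω j ∂μ = if i = j then 1 else 0) {v : ℝ}
    (hz : ∀ i, MemLp (fun ω => z ω i) 2 μ) (hz0 : ∀ i, ∫ ω, z ω i ∂μ = 0)
    (hzcov : ∀ i j, ∫ ω, z ω i * z ω j ∂μ = if i = j then v else 0)
    (hind : IndepFun z s μ) (a : ℝ) :
    ∫ ω, (∑ i, (a * w i + z ω i) * s ω i) ^ 2 ∂μ = a ^ 2 + Fintype.card ι * v := by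
  have hA : ∀ i, MemLp (fun ω => a * w i + z ω i) 2 μ :=
    fun i => (memLp_const (a * w i)).add (hz i)
  have hAs : IndepFun (fun ω => (fun i => a * w i + z ω i, fun i => a * w i + z ω i)) s μ :=
    hind.comp (φ := fun x : ι → ℝ => (fun i => a * w i + x i, fun i => a * w i + x i))
      (by fun_prop) measurable_id
  have hz2 : ∀ i, ∫ ω, z ω i ^ 2 ∂μ = v := fun i => by simpa [sq] using hzcov i i
  simp_rw [sq]
  rw [integral_sum_mul_sum_of_indepFun hAs hA hA hs hscov]
  simp_rw [← sq, integral_const_add_sq (hz _) (hz0 _), hz2]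
  simp [mul_pow, sum_add_distrib, ← mul_sum, hw]

lemma integral_prediction_mul_target (hw : ∑ i, w i ^ 2 = 1)
    (hs : ∀ i, MemLp (fun ω => s ω i) 2 μ)
    (hscov : ∀ i j, ∫ ω, s ω i * s ω j ∂μ = if i = j then 1 else 0)
    (hz : ∀ i, MemLp (fun ω => z ω i) 2 μ) (hz0 : ∀ i, ∫ ω, z ω i ∂μ = 0)
    (hε : MemLp ε 2 μ) (hε0 : ∫ ω, ε ω ∂μ = 0)
    (hind : IndepFun z s μ) (hindε : IndepFun (fun ω => (s ω, z ω)) ε μ) (a b : ℝ) :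
    ∫ ω, (∑ i, (a * w i + z ω i) * s ω i) * (b * ∑ i, w i * s ω i + ε ω) ∂μ = a * b := by
  have hA : ∀ i, MemLp (fun ω => a * w i + z ω i) 2 μ :=
    fun i => (memLp_const (a * w i)).add (hz i)
  have hAs : IndepFun (fun ω => (fun i => a * w i + z ω i, w)) s μ :=
    hind.comp (φ := fun x : ι → ℝ => (fun i => a * w i + x i, w)) (by fun_prop) measurable_id
  have hY : MemLp (fun ω => ∑ i, (a * w i + z ω i) * s ω i) 2 μ :=
    memLp_two_sum_mul_of_indepFun
      (hind.comp (φ := fun x : ι → ℝ => fun i => a * w i + x i) (by fun_prop) measurable_id)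
      hA hs
  have hYε : IndepFun (fun ω => ∑ i, (a * w i + z ω i) * s ω i) ε μ :=
    hindε.comp (φ := fun p : (ι → ℝ) × (ι → ℝ) => ∑ i, (a * w i + p.2 i) * p.1 i)
      (by fun_prop) measurable_id
  have hS : MemLp (fun ω => ∑ i, w i * s ω i) 2 μ :=
    memLp_finsetSum _ fun i _ => (hs i).const_mul (w i)
  have hAw : ∀ i, ∫ ω, (a * w i + z ω i) * w i ∂μ = a * w i ^ 2 := fun i => by
    rw [integral_mul_const, integral_add (integrable_const _) ((hz i).integrable one_le_two),
      hz0]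
    simp [sq, mul_assoc]
  calc ∫ ω, (∑ i, (a * w i + z ω i) * s ω i) * (b * ∑ i, w i * s ω i + ε ω) ∂μ
      = b * ∫ ω, (∑ i, (a * w i + z ω i) * s ω i) * ∑ i, w i * s ω i ∂μ
          + ∫ ω, (∑ i, (a * w i + z ω i) * s ω i) * ε ω ∂μ := by
        simp_rw [mul_add, mul_left_comm _ b]
        rw [integral_add, integral_const_mul]
        exacts [(hY.integrable_mul hS).const_mul b, hY.integrable_mul hε]
    _ = a * b := by
        rw [integral_sum_mul_sum_of_indepFun hAs hA (fun i => memLp_const (w i)) hs hscov,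
          hYε.integral_mul_eq_zero hY.1 hε.1 hε0, sum_congr rfl fun i _ => hAw i, ← mul_sum, hw]
        ring

end FactorModel

theorem squared_correlation_formula_general
    {Ω : Type*} [MeasurableSpace Ω] (μ : Measure Ω) [IsProbabilityMeasure μ]
    {d : ℕ}
    (w : Fin d → ℝ) (hw : ∑ i, w i ^ 2 = 1)
    (αδ αΔ v σΔsq : ℝ)
    (s z : Ω → Fin d → ℝ) (ε : Ω → ℝ)
    (hs2 : ∀ i, MemLp (fun ω => s ω i) 2 μ)
    (hz2 : ∀ i, MemLp (fun ω => z ω i) 2 μ)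
    (hε2 : MemLp ε 2 μ)
    (hscov : ∀ i j, ∫ ω, s ω i * s ω j ∂μ = if i = j then 1 else 0)
    (hz0 : ∀ i, ∫ ω, z ω i ∂μ = 0)
    (hzcov : ∀ i j, ∫ ω, z ω i * z ω j ∂μ = if i = j then v else 0)
    (hε0 : ∫ ω, ε ω ∂μ = 0)
    (hεvar : ∫ ω, ε ω ^ 2 ∂μ = σΔsq)
    (hindep_sz : IndepFun s z μ)
    (hindep_ε : IndepFun (fun ω => (s ω, z ω)) ε μ) :
    (∫ ω, (∑ i, (αδ * w i + z ω i) * s ω i) * (αΔ * (∑ i, w i * s ω i) + ε ω) ∂μ) ^ 2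
        / ((∫ ω, (∑ i, (αδ * w i + z ω i) * s ω i) ^ 2 ∂μ)
           * (∫ ω, (αΔ * (∑ i, w i * s ω i) + ε ω) ^ 2 ∂μ))
      = αδ ^ 2 * αΔ ^ 2 / ((αδ ^ 2 + d * v) * (αΔ ^ 2 + σΔsq)) := by
  rw [integral_prediction_mul_target hw hs2 hscov hz2 hz0 hε2 hε0 hindep_sz.symm hindep_ε,
    integral_prediction_sq hw hs2 hscov hz2 hz0 hzcov hindep_sz.symm,
    integral_target_sq hw hs2 hscov hε2 hε0 (hindep_ε.comp measurable_fst measurable_id),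
    hεvar, Fintype.card_fin, mul_pow]

/-- Under the factor-model setup, with prediction
`ŷ = Σ_i (α_δ·w_i + z_i)·s_i` and target return `rΔ = α_Δ·(Σ_i w_i·s_i) + εΔ`,
the squared correlation satisfies
`Cov(ŷ, rΔ)² / (Var(ŷ)·Var(rΔ)) = α_δ²·α_Δ² / ((α_δ² + d·v)·(α_Δ² + σΔ²))`. -/
theorem squared_correlation_formula
    {Ω : Type*} [MeasurableSpace Ω] (μ : Measure Ω) [IsProbabilityMeasure μ]
    {d : ℕ} (hd : 1 ≤ d)
    (w : Fin d → ℝ) (hw : ∑ i, w i ^ 2 = 1)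
    (αδ αΔ v σΔsq : ℝ) (hαδ : 0 < αδ) (hαΔ : 0 < αΔ) (hv : 0 < v) (hσ : 0 < σΔsq)
    (s z : Ω → Fin d → ℝ) (ε : Ω → ℝ)
    (hs_meas : Measurable s) (hz_meas : Measurable z) (hε_meas : Measurable ε)
    (hs2 : ∀ i, MemLp (fun ω => s ω i) 2 μ)
    (hz2 : ∀ i, MemLp (fun ω => z ω i) 2 μ)
    (hε2 : MemLp ε 2 μ)
    (hs0 : ∀ i, ∫ ω, s ω i ∂μ = 0)
    (hscov : ∀ i j, ∫ ω, s ω i * s ω j ∂μ = if i = j then 1 else 0)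
    (hz0 : ∀ i, ∫ ω, z ω i ∂μ = 0)
    (hzcov : ∀ i j, ∫ ω, z ω i * z ω j ∂μ = if i = j then v else 0)
    (hε0 : ∫ ω, ε ω ∂μ = 0)
    (hεvar : ∫ ω, ε ω ^ 2 ∂μ = σΔsq)
    (hindep_sz : IndepFun s z μ)
    (hindep_ε : IndepFun (fun ω => (s ω, z ω)) ε μ) :
    (∫ ω, (∑ i, (αδ * w i + z ω i) * s ω i) * (αΔ * (∑ i, w i * s ω i) + ε ω) ∂μ) ^ 2
        / ((∫ ω, (∑ i, (αδ * w i + z ω i) * s ω i) ^ 2 ∂μ)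
           * (∫ ω, (αΔ * (∑ i, w i * s ω i) + ε ω) ^ 2 ∂μ))
      = αδ ^ 2 * αΔ ^ 2 / ((αδ ^ 2 + d * v) * (αΔ ^ 2 + σΔsq)) :=
  squared_correlation_formula_general μ w hw αδ αΔ v σΔsq s z ε hs2 hz2 hε2 hscov hz0 hzcov hε0
    hεvar hindep_sz hindep_ε
end

section
/- Let A, Z, E1, E2 : Ω → ℝ be square-integrable, centered random variables on a probability space, pairwise uncorrelated (E[A·Z] = E[A·E1] = E[A·E2] = E[Z·E1] = E[Z·E2] = E[E1·E2] = 0), with Var(A) > 0, Var(A) + Var(Z) > 0, Var(A) + Var(E1) > 0, and Var(A) + Var(E1) + Var(E2) > 0. Define ŷ = A + Z, rδ = A + E1, and rΔ = A + E1 + E2. Then the Pearson correlations satisfy exactly Corr(ŷ, rΔ) = Corr(ŷ, rδ) · Corr(rδ, rΔ). (This is the exact form of the paper's Corollary: the final predictive correlation equals the product of the proxy correlation and the label-alignment correlation when the signal component is common to proxy and target, i.e., α(δ) = α(Δ), and the noise is nested.) -/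
/-!
Pearson correlations of square-integrable functions are cosines of angles in `L²(μ)`.
With `x = ŷ`, `u = rδ`, `w = rΔ`, the noise `w - u = E2` is orthogonal to `x` and to `u`,
so `u` is the orthogonal projection of `w` onto the span of `x` and `u`; hence
`⟪x, w⟫ = ⟪x, u⟫` and `⟪u, w⟫ = ‖u‖²`, which is exactly the factorization
`cos ∠(x, w) = cos ∠(x, u) · cos ∠(u, w)`.
-/

open MeasureTheory InnerProductGeometry RealInnerProductSpace

theorem InnerProductGeometry.cos_angle_mul_cos_angle_of_inner_sub_eq_zero {V : Type*}
    [NormedAddCommGroup V] [InnerProductSpace ℝ V] {x u w : V}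
    (hx : ⟪x, w - u⟫ = 0) (hu : ⟪u, w - u⟫ = 0) :
    Real.cos (angle x u) * Real.cos (angle u w) = Real.cos (angle x w) := by
  have hxw : ⟪x, w⟫ = ⟪x, u⟫ := by rwa [inner_sub_right, sub_eq_zero] at hx
  have huw : ⟪u, w⟫ = ‖u‖ ^ 2 := by
    rwa [inner_sub_right, sub_eq_zero, real_inner_self_eq_norm_sq] at hu
  rcases eq_or_ne u 0 with rfl | hu0
  · simp [cos_angle, hxw]
  · have : ‖u‖ ≠ 0 := norm_ne_zero_iff.mpr hu0
    rw [cos_angle, cos_angle, cos_angle, hxw, huw]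
    field_simp

section L2

variable {Ω : Type*} [MeasurableSpace Ω] {μ : Measure Ω} {f g : Ω → ℝ}

theorem MeasureTheory.MemLp.integral_mul_eq_inner_toLp (hf : MemLp f 2 μ) (hg : MemLp g 2 μ) :
    ∫ ω, f ω * g ω ∂μ = ⟪hf.toLp f, hg.toLp g⟫ := by
  rw [L2.inner_def]
  refine integral_congr_ae ?_
  filter_upwards [hf.coeFn_toLp, hg.coeFn_toLp] with ω hfω hgω
  rw [hfω, hgω, Real.inner_apply]

theorem MeasureTheory.MemLp.sqrt_integral_sq_eq_norm_toLp (hf : MemLp f 2 μ) :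
    √(∫ ω, f ω ^ 2 ∂μ) = ‖hf.toLp f‖ := by
  simp_rw [sq, hf.integral_mul_eq_inner_toLp hf, norm_eq_sqrt_real_inner]

theorem MeasureTheory.MemLp.integral_mul_div_sqrt_eq_cos_angle (hf : MemLp f 2 μ)
    (hg : MemLp g 2 μ) :
    (∫ ω, f ω * g ω ∂μ) / (√(∫ ω, f ω ^ 2 ∂μ) * √(∫ ω, g ω ^ 2 ∂μ))
      = Real.cos (angle (hf.toLp f) (hg.toLp g)) := by
  rw [hf.integral_mul_eq_inner_toLp hg, hf.sqrt_integral_sq_eq_norm_toLp,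
    hg.sqrt_integral_sq_eq_norm_toLp, cos_angle]

end L2

theorem corr_factorization_nested_noise_general
    {Ω : Type*} [MeasurableSpace Ω] (μ : Measure Ω)
    (A Z E1 E2 : Ω → ℝ)
    (hA : MemLp A 2 μ) (hZ : MemLp Z 2 μ) (hE1 : MemLp E1 2 μ) (hE2 : MemLp E2 2 μ)
    (hAE2 : ∫ ω, A ω * E2 ω ∂μ = 0)
    (hZE2 : ∫ ω, Z ω * E2 ω ∂μ = 0)
    (hE1E2 : ∫ ω, E1 ω * E2 ω ∂μ = 0) :
    (∫ ω, (A ω + Z ω) * (A ω + E1 ω + E2 ω) ∂μ)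
        / (Real.sqrt (∫ ω, (A ω + Z ω) ^ 2 ∂μ)
           * Real.sqrt (∫ ω, (A ω + E1 ω + E2 ω) ^ 2 ∂μ))
      = ((∫ ω, (A ω + Z ω) * (A ω + E1 ω) ∂μ)
          / (Real.sqrt (∫ ω, (A ω + Z ω) ^ 2 ∂μ)
             * Real.sqrt (∫ ω, (A ω + E1 ω) ^ 2 ∂μ)))
        * ((∫ ω, (A ω + E1 ω) * (A ω + E1 ω + E2 ω) ∂μ)
          / (Real.sqrt (∫ ω, (A ω + E1 ω) ^ 2 ∂μ)
             * Real.sqrt (∫ ω, (A ω + E1 ω + E2 ω) ^ 2 ∂μ))) := by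
  have hAZ := hA.add hZ
  have hAE1 := hA.add hE1
  have hAE1E2 := hAE1.add hE2
  simp only [← Pi.add_apply]
  rw [hAZ.integral_mul_div_sqrt_eq_cos_angle hAE1E2, hAZ.integral_mul_div_sqrt_eq_cos_angle hAE1,
    hAE1.integral_mul_div_sqrt_eq_cos_angle hAE1E2, MemLp.toLp_add hAE1 hE2,
    MemLp.toLp_add hA hE1, MemLp.toLp_add hA hZ]
  rw [hA.integral_mul_eq_inner_toLp hE2] at hAE2
  rw [hZ.integral_mul_eq_inner_toLp hE2] at hZE2
  rw [hE1.integral_mul_eq_inner_toLp hE2] at hE1E2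
  refine (cos_angle_mul_cos_angle_of_inner_sub_eq_zero ?_ ?_).symm <;>
    simp only [add_sub_cancel_left, inner_add_left, hAE2, hZE2, hE1E2, add_zero]

/-- For centered, square-integrable, pairwise-uncorrelated `A, Z, E1, E2`
with the indicated positive variances, setting `ŷ = A + Z`, `rδ = A + E1`,
`rΔ = A + E1 + E2`, the Pearson correlations satisfy exactly
`Corr(ŷ, rΔ) = Corr(ŷ, rδ) · Corr(rδ, rΔ)`. -/
theorem corr_factorization_nested_noise
    {Ω : Type*} [MeasurableSpace Ω] (μ : Measure Ω) [IsProbabilityMeasure μ]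
    (A Z E1 E2 : Ω → ℝ)
    (hA : MemLp A 2 μ) (hZ : MemLp Z 2 μ) (hE1 : MemLp E1 2 μ) (hE2 : MemLp E2 2 μ)
    (hA0 : ∫ ω, A ω ∂μ = 0) (hZ0 : ∫ ω, Z ω ∂μ = 0)
    (hE10 : ∫ ω, E1 ω ∂μ = 0) (hE20 : ∫ ω, E2 ω ∂μ = 0)
    (hAZ : ∫ ω, A ω * Z ω ∂μ = 0)
    (hAE1 : ∫ ω, A ω * E1 ω ∂μ = 0)
    (hAE2 : ∫ ω, A ω * E2 ω ∂μ = 0)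
    (hZE1 : ∫ ω, Z ω * E1 ω ∂μ = 0)
    (hZE2 : ∫ ω, Z ω * E2 ω ∂μ = 0)
    (hE1E2 : ∫ ω, E1 ω * E2 ω ∂μ = 0)
    (hVarA : 0 < ∫ ω, A ω ^ 2 ∂μ)
    (hVarAZ : 0 < (∫ ω, A ω ^ 2 ∂μ) + ∫ ω, Z ω ^ 2 ∂μ)
    (hVarAE1 : 0 < (∫ ω, A ω ^ 2 ∂μ) + ∫ ω, E1 ω ^ 2 ∂μ)
    (hVarAE1E2 : 0 < (∫ ω, A ω ^ 2 ∂μ) + (∫ ω, E1 ω ^ 2 ∂μ) + ∫ ω, E2 ω ^ 2 ∂μ) :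
    (∫ ω, (A ω + Z ω) * (A ω + E1 ω + E2 ω) ∂μ)
        / (Real.sqrt (∫ ω, (A ω + Z ω) ^ 2 ∂μ)
           * Real.sqrt (∫ ω, (A ω + E1 ω + E2 ω) ^ 2 ∂μ))
      = ((∫ ω, (A ω + Z ω) * (A ω + E1 ω) ∂μ)
          / (Real.sqrt (∫ ω, (A ω + Z ω) ^ 2 ∂μ)
             * Real.sqrt (∫ ω, (A ω + E1 ω) ^ 2 ∂μ)))
        * ((∫ ω, (A ω + E1 ω) * (A ω + E1 ω + E2 ω) ∂μ)
          / (Real.sqrt (∫ ω, (A ω + E1 ω) ^ 2 ∂μ)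
             * Real.sqrt (∫ ω, (A ω + E1 ω + E2 ω) ^ 2 ∂μ))) :=
  corr_factorization_nested_noise_general μ A Z E1 E2 hA hZ hE1 hE2 hAE2 hZE2 hE1E2
end

section
/- Let α : ℝ → ℝ be differentiable on an interval [l, u] with l < u, l + δ0 > 0, and α(t) > 0 for all t ∈ [l, u], and let K > 0. Define g(t) = 2·log(α(t)) − log(α(t)² + K·(t + δ0)). If α'(t)/α(t) > 1/(2·(t + δ0)) for every t ∈ [l, u], then g is strictly monotone increasing on [l, u]; in particular g(t) < g(u) for every t ∈ [l, u) , so the log-performance over [l, u] is maximized at the right endpoint u. (Short-horizon regime: when the marginal signal realization outpaces noise accumulation throughout the window, training on the full target horizon is optimal.) -/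
/-- If `α` is differentiable on `[l, u]` with derivative `α'`, positive
there, `l + δ0 > 0`, `K > 0`, and the relative signal growth rate exceeds the noise
threshold, `α'(t)/α(t) > 1/(2·(t + δ0))`, throughout `[l, u]`, then the log-performance
`g(t) = 2·log(α t) − log((α t)² + K·(t + δ0))` is strictly monotone increasing on
`[l, u]`; in particular `g(t) < g(u)` for all `t ∈ [l, u)`, so the log-performance is
maximized at the right endpoint `u`. -/
theorem short_horizon_regime_max_at_target
    (α α' : ℝ → ℝ) (K δ0 l u : ℝ) (hlu : l < u) (hl : 0 < l + δ0) (hK : 0 < K)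
    (hαpos : ∀ t ∈ Set.Icc l u, 0 < α t)
    (hderiv : ∀ t ∈ Set.Icc l u, HasDerivAt α (α' t) t)
    (hgrowth : ∀ t ∈ Set.Icc l u, α' t / α t > 1 / (2 * (t + δ0))) :
    StrictMonoOn (fun t => 2 * Real.log (α t) - Real.log ((α t) ^ 2 + K * (t + δ0)))
        (Set.Icc l u)
      ∧ ∀ t ∈ Set.Ico l u,
          2 * Real.log (α t) - Real.log ((α t) ^ 2 + K * (t + δ0))
            < 2 * Real.log (α u) - Real.log ((α u) ^ 2 + K * (u + δ0)) := by
  have hs : ∀ t ∈ Set.Icc l u, 0 < t + δ0 := fun t ht => lt_of_lt_of_le hl (by linarith [ht.1])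
  have hD : ∀ t ∈ Set.Icc l u, 0 < (α t) ^ 2 + K * (t + δ0) := fun t ht =>
    add_pos (pow_pos (hαpos t ht) 2) (mul_pos hK (hs t ht))
  -- derivative of g
  have hg : ∀ t ∈ Set.Icc l u,
      HasDerivAt (fun t => 2 * Real.log (α t) - Real.log ((α t) ^ 2 + K * (t + δ0)))
        (2 * (α' t / α t) - ((2 : ℕ) * α t ^ 1 * α' t + K * 1) / ((α t) ^ 2 + K * (t + δ0))) t := by
    intro t ht
    have h1 : HasDerivAt (fun t => 2 * Real.log (α t)) (2 * (α' t / α t)) t :=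
      (((hderiv t ht).log (hαpos t ht).ne')).const_mul 2
    have h2 : HasDerivAt (fun t => (α t) ^ 2 + K * (t + δ0))
        ((2 : ℕ) * α t ^ 1 * α' t + K * 1) t :=
      ((hderiv t ht).pow 2).add (((hasDerivAt_id t).add_const δ0).const_mul K)
    exact h1.sub (h2.log (hD t ht).ne')
  have hpos : ∀ t ∈ Set.Icc l u,
      0 < 2 * (α' t / α t) - ((2 : ℕ) * α t ^ 1 * α' t + K * 1) / ((α t) ^ 2 + K * (t + δ0)) := by
    intro t ht
    have ha := hαpos t ht
    have hst := hs t ht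
    have hDt := hD t ht
    have hgt := hgrowth t ht
    have key : α t < 2 * α' t * (t + δ0) := by
      have := (div_lt_div_iff₀ (by positivity) ha).mp hgt
      nlinarith
    rw [sub_pos, show 2 * (α' t / α t) = (2 * α' t) / α t from by ring,
      div_lt_div_iff₀ hDt ha]
    push_cast
    nlinarith [mul_pos hK (sub_pos.mpr key)]
  have hcont : ContinuousOn (fun t => 2 * Real.log (α t) - Real.log ((α t) ^ 2 + K * (t + δ0)))
      (Set.Icc l u) := fun t ht => ((hg t ht).continuousAt).continuousWithinAt
  have hint : interior (Set.Icc l u) = Set.Ioo l u := interior_Icc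
  have hmono : StrictMonoOn (fun t => 2 * Real.log (α t) - Real.log ((α t) ^ 2 + K * (t + δ0)))
      (Set.Icc l u) := by
    apply strictMonoOn_of_hasDerivWithinAt_pos (convex_Icc l u) hcont
    · intro x hx
      rw [hint] at hx
      exact ((hg x ⟨hx.1.le, hx.2.le⟩).hasDerivWithinAt)
    · intro x hx
      rw [hint] at hx
      exact hpos x ⟨hx.1.le, hx.2.le⟩
  exact ⟨hmono, fun t ht => hmono ⟨ht.1, ht.2.le⟩ ⟨hlu.le, le_refl u⟩ ht.2⟩
end
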